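/- Let H₁ be a p×h₁ real matrix of rank h₁ and H₂ a p×h₂ real matrix of rank h₂, with orthogonal projection matrices Pᵢ = Hᵢ(HᵢᵀHᵢ)⁻¹Hᵢᵀ. Then tr(P₁P₂) = min(h₁, h₂) if and only if M(H₁) ⊆ M(H₂) or M(H₂) ⊆ M(H₁). In particular, D̄(M(H₁), M(H₂)) = 0 if and only if h₁ = h₂ and M(H₁) = M(H₂). -/
import Mathlib


open Matrix

/-- The orthogonal projection matrix `P_H = H (HᵀH)⁻¹ Hᵀ` onto the column space of a
full-column-rank matrix `H`. -/
noncomputable def projMat {p h : ℕ} (H : Matrix (Fin p) (Fin h) ℝ) :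
    Matrix (Fin p) (Fin p) ℝ :=
  H * (Hᵀ * H)⁻¹ * Hᵀ

namespace ProjAux

/-- Two matrices with equal `mulVec` are equal. -/
lemma ext_of_mulVec {m n : ℕ} {A B : Matrix (Fin m) (Fin n) ℝ}
    (hAB : ∀ v, A *ᵥ v = B *ᵥ v) : A = B := by
  ext i j
  have h := congrFun (hAB (Pi.single j 1)) i
  simpa [Matrix.mulVec_single_one] using h

lemma isUnit_gram {p h : ℕ} (H : Matrix (Fin p) (Fin h) ℝ) (hr : H.rank = h) :
    IsUnit (Hᵀ * H).det := by
  rw [← Matrix.isUnit_iff_isUnit_det, ← Matrix.mulVec_injective_iff_isUnit]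
  have hrank : (Hᵀ * H).rank = h := by rw [Matrix.rank_transpose_mul_self, hr]
  have htop : LinearMap.range (Hᵀ * H).mulVecLin = ⊤ := by
    apply Submodule.eq_top_of_finrank_eq
    rw [Module.finrank_fin_fun]
    exact hrank
  have hsurj : Function.Surjective (Hᵀ * H).mulVecLin :=
    LinearMap.range_eq_top.mp htop
  have hinj : Function.Injective (Hᵀ * H).mulVecLin :=
    (LinearMap.injective_iff_surjective).mpr hsurj
  intro x y hxy
  exact hinj (by simp only [Matrix.mulVecLin_apply]; exact hxy)

lemma projMat_mul_self_eq {p h : ℕ} (H : Matrix (Fin p) (Fin h) ℝ) (hr : H.rank = h) :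
    projMat H * H = H := by
  have h1 : (Hᵀ * H)⁻¹ * (Hᵀ * H) = 1 := Matrix.nonsing_inv_mul _ (isUnit_gram H hr)
  calc projMat H * H = H * ((Hᵀ * H)⁻¹ * (Hᵀ * H)) := by
        simp [projMat, Matrix.mul_assoc]
    _ = H := by rw [h1, Matrix.mul_one]

lemma projMat_idem {p h : ℕ} (H : Matrix (Fin p) (Fin h) ℝ) (hr : H.rank = h) :
    projMat H * projMat H = projMat H := by
  calc projMat H * projMat H = (projMat H * H) * ((Hᵀ * H)⁻¹ * Hᵀ) := by
        simp [projMat, Matrix.mul_assoc]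
    _ = projMat H := by rw [projMat_mul_self_eq H hr, projMat, Matrix.mul_assoc]

lemma projMat_transpose {p h : ℕ} (H : Matrix (Fin p) (Fin h) ℝ) :
    (projMat H)ᵀ = projMat H := by
  have hsym : (Hᵀ * H)ᵀ = Hᵀ * H := by
    rw [Matrix.transpose_mul, Matrix.transpose_transpose]
  simp only [projMat, Matrix.transpose_mul, Matrix.transpose_transpose,
    Matrix.transpose_nonsing_inv, hsym, Matrix.mul_assoc]

lemma trace_projMat {p h : ℕ} (H : Matrix (Fin p) (Fin h) ℝ) (hr : H.rank = h) :
    trace (projMat H) = (h : ℝ) := by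
  rw [projMat, Matrix.trace_mul_cycle, Matrix.mul_nonsing_inv _ (isUnit_gram H hr),
    Matrix.trace_one]
  simp

lemma range_mul_le {m n k : ℕ} (A : Matrix (Fin m) (Fin n) ℝ) (B : Matrix (Fin n) (Fin k) ℝ) :
    LinearMap.range (A * B).mulVecLin ≤ LinearMap.range A.mulVecLin := by
  rw [Matrix.mulVecLin_mul]
  exact LinearMap.range_comp_le_range _ _

lemma range_projMat_le {p h : ℕ} (H : Matrix (Fin p) (Fin h) ℝ) :
    LinearMap.range (projMat H).mulVecLin ≤ LinearMap.range H.mulVecLin := by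
  have : projMat H = H * ((Hᵀ * H)⁻¹ * Hᵀ) := by rw [projMat, Matrix.mul_assoc]
  rw [this]
  exact range_mul_le _ _

lemma range_projMat {p h : ℕ} (H : Matrix (Fin p) (Fin h) ℝ) (hr : H.rank = h) :
    LinearMap.range (projMat H).mulVecLin = LinearMap.range H.mulVecLin := by
  refine le_antisymm (range_projMat_le H) ?_
  have : H = projMat H * H := (projMat_mul_self_eq H hr).symm
  conv_lhs => rw [this]
  exact range_mul_le _ _

lemma projMat_fix {p h : ℕ} (H : Matrix (Fin p) (Fin h) ℝ) (hr : H.rank = h)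
    {x : Fin p → ℝ} (hx : x ∈ LinearMap.range H.mulVecLin) :
    projMat H *ᵥ x = x := by
  obtain ⟨v, rfl⟩ := hx
  simp only [Matrix.mulVecLin_apply]
  rw [Matrix.mulVec_mulVec, projMat_mul_self_eq H hr]

/-- If `M(H₁) ⊆ M(H₂)` then `P₂ P₁ = P₁`. -/
lemma proj_mul_proj {p h₁ h₂ : ℕ} (H₁ : Matrix (Fin p) (Fin h₁) ℝ)
    (H₂ : Matrix (Fin p) (Fin h₂) ℝ) (hr2 : H₂.rank = h₂)
    (hle : LinearMap.range H₁.mulVecLin ≤ LinearMap.range H₂.mulVecLin) :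
    projMat H₂ * projMat H₁ = projMat H₁ := by
  apply ext_of_mulVec
  intro v
  rw [← Matrix.mulVec_mulVec]
  apply projMat_fix H₂ hr2
  apply hle
  exact range_projMat_le H₁ ⟨v, rfl⟩

lemma trace_mul_transpose_nonneg {p : ℕ} (B : Matrix (Fin p) (Fin p) ℝ) :
    0 ≤ trace (B * Bᵀ) := by
  have : trace (B * Bᵀ) = ∑ i, ∑ j, B i j * B i j := by
    simp [Matrix.trace, Matrix.mul_apply, Matrix.diag]
  rw [this]
  exact Finset.sum_nonneg fun i _ => Finset.sum_nonneg fun j _ => mul_self_nonneg _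

lemma trace_mul_transpose_eq_zero_iff {p : ℕ} (B : Matrix (Fin p) (Fin p) ℝ) :
    trace (B * Bᵀ) = 0 ↔ B = 0 := by
  have h : trace (B * Bᵀ) = ∑ i, ∑ j, B i j * B i j := by
    simp [Matrix.trace, Matrix.mul_apply, Matrix.diag]
  rw [h]
  constructor
  · intro h0
    ext i j
    have h1 : ∀ i ∈ Finset.univ, (0:ℝ) ≤ ∑ j, B i j * B i j :=
      fun i _ => Finset.sum_nonneg fun j _ => mul_self_nonneg _
    have h2 := (Finset.sum_eq_zero_iff_of_nonneg h1).mp h0 i (Finset.mem_univ i)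
    have h3 : ∀ j ∈ Finset.univ, (0:ℝ) ≤ B i j * B i j :=
      fun j _ => mul_self_nonneg _
    have h4 := (Finset.sum_eq_zero_iff_of_nonneg h3).mp h2 j (Finset.mem_univ j)
    simpa using mul_self_eq_zero.mp h4
  · intro h0
    simp [h0]

/-- The key trace identity for symmetric idempotent matrices. -/
lemma trace_sub_eq' {p : ℕ} {P₁ P₂ : Matrix (Fin p) (Fin p) ℝ}
    (h1t : P₁ᵀ = P₁) (h1i : P₁ * P₁ = P₁) (h2t : P₂ᵀ = P₂) (h2i : P₂ * P₂ = P₂) :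
    trace P₂ - trace (P₁ * P₂) = trace ((1 - P₁) * P₂ * ((1 - P₁) * P₂)ᵀ) := by
  have hT : ((1 - P₁) * P₂)ᵀ = P₂ * (1 - P₁) := by
    rw [Matrix.transpose_mul, h2t, Matrix.transpose_sub, Matrix.transpose_one, h1t]
  have hQ : (1 - P₁) * (1 - P₁) = 1 - P₁ := by
    simp only [Matrix.mul_sub, Matrix.sub_mul, Matrix.mul_one, Matrix.one_mul, h1i]
    abel
  have hstep : (1 - P₁) * P₂ * (P₂ * (1 - P₁)) = (1 - P₁) * (P₂ * P₂) * (1 - P₁) := by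
    simp only [Matrix.mul_assoc]
  rw [hT, hstep, h2i, Matrix.trace_mul_cycle, hQ, Matrix.sub_mul, Matrix.one_mul,
    Matrix.trace_sub]

/-- The key trace identity: `h₂ - tr(P₁P₂) = tr(B Bᵀ)` for `B = (1 - P₁) P₂`. -/
lemma trace_sub_eq {p h₁ h₂ : ℕ} (H₁ : Matrix (Fin p) (Fin h₁) ℝ)
    (H₂ : Matrix (Fin p) (Fin h₂) ℝ) (hr1 : H₁.rank = h₁) (hr2 : H₂.rank = h₂) :
    (h₂ : ℝ) - trace (projMat H₁ * projMat H₂) =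
      trace ((1 - projMat H₁) * projMat H₂ * ((1 - projMat H₁) * projMat H₂)ᵀ) := by
  rw [← trace_projMat H₂ hr2]
  exact trace_sub_eq' (projMat_transpose H₁) (projMat_idem H₁ hr1)
    (projMat_transpose H₂) (projMat_idem H₂ hr2)

/-- `tr(P₁ P₂) ≤ h₂`, with equality iff `M(H₂) ⊆ M(H₁)`. -/
lemma trace_le_and_eq_iff {p h₁ h₂ : ℕ} (H₁ : Matrix (Fin p) (Fin h₁) ℝ)
    (H₂ : Matrix (Fin p) (Fin h₂) ℝ) (hr1 : H₁.rank = h₁) (hr2 : H₂.rank = h₂) :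
    trace (projMat H₁ * projMat H₂) ≤ (h₂ : ℝ) ∧
    (trace (projMat H₁ * projMat H₂) = (h₂ : ℝ) ↔
      LinearMap.range H₂.mulVecLin ≤ LinearMap.range H₁.mulVecLin) := by
  have key := trace_sub_eq H₁ H₂ hr1 hr2
  have hnn := trace_mul_transpose_nonneg ((1 - projMat H₁) * projMat H₂)
  refine ⟨by linarith, ?_, ?_⟩
  · intro ht
    have hz : trace ((1 - projMat H₁) * projMat H₂ *
        ((1 - projMat H₁) * projMat H₂)ᵀ) = 0 := by
      rw [← key, ht]; ring
    have hB0 := (trace_mul_transpose_eq_zero_iff _).mp hz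
    have hPP : projMat H₁ * projMat H₂ = projMat H₂ := by
      rw [Matrix.sub_mul, Matrix.one_mul, sub_eq_zero] at hB0
      exact hB0.symm
    calc LinearMap.range H₂.mulVecLin
        = LinearMap.range (projMat H₂).mulVecLin := (range_projMat H₂ hr2).symm
      _ = LinearMap.range (projMat H₁ * projMat H₂).mulVecLin := by rw [hPP]
      _ ≤ LinearMap.range (projMat H₁).mulVecLin := range_mul_le _ _
      _ = LinearMap.range H₁.mulVecLin := range_projMat H₁ hr1
  · intro hle
    rw [proj_mul_proj H₂ H₁ hr1 hle]
    exact trace_projMat H₂ hr2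

end ProjAux

open ProjAux in
/-- For full-column-rank matrices `H₁` (`p × h₁`) and `H₂` (`p × h₂`) with
projection matrices `Pᵢ = Hᵢ(HᵢᵀHᵢ)⁻¹Hᵢᵀ`, `tr(P₁P₂) = min(h₁,h₂)` iff one of the column
spaces `M(H₁)`, `M(H₂)` contains the other; in particular
`D̄(M(H₁), M(H₂)) = √(1 - tr(P₁P₂)/max(h₁,h₂)) = 0` iff `h₁ = h₂` and `M(H₁) = M(H₂)`. -/
theorem trace_projMat_eq_min_iff_subset {p h₁ h₂ : ℕ} (h1pos : 1 ≤ h₁) (h2pos : 1 ≤ h₂)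
    (H₁ : Matrix (Fin p) (Fin h₁) ℝ) (H₂ : Matrix (Fin p) (Fin h₂) ℝ)
    (hr1 : H₁.rank = h₁) (hr2 : H₂.rank = h₂) :
    (trace (projMat H₁ * projMat H₂) = (min h₁ h₂ : ℝ) ↔
      LinearMap.range H₁.mulVecLin ≤ LinearMap.range H₂.mulVecLin ∨
      LinearMap.range H₂.mulVecLin ≤ LinearMap.range H₁.mulVecLin) ∧
    (Real.sqrt (1 - trace (projMat H₁ * projMat H₂) / (max h₁ h₂ : ℝ)) = 0 ↔
      h₁ = h₂ ∧ LinearMap.range H₁.mulVecLin = LinearMap.range H₂.mulVecLin) := by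
  set R₁ := LinearMap.range H₁.mulVecLin with hR₁
  set R₂ := LinearMap.range H₂.mulVecLin with hR₂
  have f1 : Module.finrank ℝ R₁ = h₁ := hr1
  have f2 : Module.finrank ℝ R₂ = h₂ := hr2
  set t := trace (projMat H₁ * projMat H₂) with htdef
  obtain ⟨hle2, hiff2⟩ := trace_le_and_eq_iff H₁ H₂ hr1 hr2
  obtain ⟨hle1, hiff1⟩ := trace_le_and_eq_iff H₂ H₁ hr2 hr1
  rw [← htdef] at hle2 hiff2
  have hcomm : trace (projMat H₂ * projMat H₁) = t := Matrix.trace_mul_comm _ _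
  rw [hcomm] at hle1 hiff1
  -- part 1
  have part1 : t = min (h₁ : ℝ) (h₂ : ℝ) ↔ R₁ ≤ R₂ ∨ R₂ ≤ R₁ := by
    constructor
    · intro ht
      rcases le_total h₁ h₂ with hc | hc
      · left
        apply hiff1.mp
        rw [ht, min_eq_left (by exact_mod_cast hc : (h₁:ℝ) ≤ h₂)]
      · right
        apply hiff2.mp
        rw [ht, min_eq_right (by exact_mod_cast hc : (h₂:ℝ) ≤ h₁)]
    · rintro (hle | hle)
      · have ht : t = (h₁ : ℝ) := hiff1.mpr hle
        have hd : h₁ ≤ h₂ := by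
          rw [← f1, ← f2]
          exact Submodule.finrank_mono hle
        rw [ht, min_eq_left (by exact_mod_cast hd : (h₁:ℝ) ≤ h₂)]
      · have ht : t = (h₂ : ℝ) := hiff2.mpr hle
        have hd : h₂ ≤ h₁ := by
          rw [← f1, ← f2]
          exact Submodule.finrank_mono hle
        rw [ht, min_eq_right (by exact_mod_cast hd : (h₂:ℝ) ≤ h₁)]
  refine ⟨part1, ?_⟩
  -- part 2
  have h1R : (1 : ℝ) ≤ (h₁ : ℝ) := by exact_mod_cast h1pos
  have hmaxpos : (0 : ℝ) < max (h₁ : ℝ) (h₂ : ℝ) :=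
    lt_of_lt_of_le zero_lt_one (le_trans h1R (le_max_left _ _))
  have htmin : t ≤ min (h₁ : ℝ) (h₂ : ℝ) := le_min hle1 hle2
  rw [Real.sqrt_eq_zero']
  constructor
  · intro hx
    have hdiv : (1 : ℝ) ≤ t / max (h₁ : ℝ) (h₂ : ℝ) := by linarith
    have hmax : max (h₁ : ℝ) (h₂ : ℝ) ≤ t := by
      have := (le_div_iff₀ hmaxpos).mp hdiv
      linarith
    have hmm : min (h₁ : ℝ) (h₂ : ℝ) = max (h₁ : ℝ) (h₂ : ℝ) :=
      le_antisymm min_le_max (le_trans hmax htmin)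
    have heq : h₁ = h₂ := by
      rcases le_total (h₁ : ℝ) (h₂ : ℝ) with hc | hc
      · rw [min_eq_left hc, max_eq_right hc] at hmm
        exact_mod_cast hmm
      · rw [min_eq_right hc, max_eq_left hc] at hmm
        exact_mod_cast hmm.symm
    have ht : t = min (h₁ : ℝ) (h₂ : ℝ) := le_antisymm htmin (hmm ▸ hmax)
    rcases part1.mp ht with hle | hle
    · exact ⟨heq, Submodule.eq_of_le_of_finrank_eq hle (by rw [f1, f2, heq])⟩
    · exact ⟨heq, (Submodule.eq_of_le_of_finrank_eq hle (by rw [f1, f2, heq])).symm⟩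
  · rintro ⟨heq, hReq⟩
    subst heq
    have ht : t = min (h₁ : ℝ) (h₁ : ℝ) := part1.mpr (Or.inl hReq.le)
    rw [ht, min_self, max_self, div_self (by linarith : (h₁ : ℝ) ≠ 0)]
    norm_num
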